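/- arXiv:1512.00670 — 3 statements merged into one kernel-verified Lean document; each statement's English description precedes it below -/
import Mathlib

section
/- The function L is slowly varying at infinity: for every fixed v > 0, L(tv)/L(t) → 1 as t → ∞. Consequently the function R(t) = C₂ ∑_{k=1}^∞ k^{-(1+2(1-H))} e^{-λt/k} can be written as R(t) = L(t)/t^{2(1-H)} for t > 0 with L slowly varying. -/
open Filter

/-- `S(t) = ∑_{k=1}^∞ k^{-(1+2(1-H))} e^{-λt/k}`. -/
noncomputable def OUsum (H lam t : ℝ) : ℝ :=
  ∑' k : ℕ, ((k : ℝ) + 1) ^ (-(1 + 2 * (1 - H))) * Real.exp (-(lam * t) / ((k : ℝ) + 1))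

/-- `L(t) = C₂ (λt)^{2(1-H)} S(t)` for `t ≠ 0`, and `L(0) = 0`. -/
noncomputable def OUslow (H lam C2 t : ℝ) : ℝ :=
  if t = 0 then 0 else C2 * (lam * t) ^ (2 * (1 - H)) * OUsum H lam t

/-!
Put `α = 2(1 - H) ∈ (0, 1)`, `T = λt` and `ψ(x) = e^{-x} x^{α-1}`, so that `Γ(α) = ∫₀^∞ ψ`.
The `k`-th term of `T^α S` equals `ψ(T/k) · T/k²`, while the cell `[T/(k+1), T/k]` has length
`T/(k(k+1))`; so `T^α S` is a Riemann sum of the decreasing function `ψ` over the nodes `T/k`.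
Comparing each term with the integral over its cell, and using `x e^{-x} ≤ 1`, gives
`|T^α S - ∫₀^T ψ| ≤ 2 ζ(1+α) T^{α-1} → 0`. Hence `L(t) → C₂ Γ(α) ≠ 0`, and a function with a
nonzero limit at infinity is slowly varying.
-/

open MeasureTheory Set Real Topology

section AntitoneIntegrals

variable {f : ℝ → ℝ}

theorem AntitoneOn.mul_sub_le_intervalIntegral {b c : ℝ} (hbc : b ≤ c)
    (hf : AntitoneOn f (Icc b c)) : f c * (c - b) ≤ ∫ x in b..c, f x :=
  calc f c * (c - b) = ∫ _ in b..c, f c := by simp [mul_comm]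
    _ ≤ ∫ x in b..c, f x :=
      intervalIntegral.integral_mono_on hbc intervalIntegrable_const
        (by rwa [uIcc_of_le hbc] : AntitoneOn f (uIcc b c)).intervalIntegrable
        fun _ hx => hf hx (right_mem_Icc.2 hbc) hx.2

theorem AntitoneOn.intervalIntegral_le_mul_sub {b c : ℝ} (hbc : b ≤ c)
    (hf : AntitoneOn f (Icc b c)) : ∫ x in b..c, f x ≤ f b * (c - b) :=
  calc ∫ x in b..c, f x ≤ ∫ _ in b..c, f b :=
      intervalIntegral.integral_mono_on hbc
        (by rwa [uIcc_of_le hbc] : AntitoneOn f (uIcc b c)).intervalIntegrable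
        intervalIntegrable_const fun _ hx => hf (left_mem_Icc.2 hbc) hx hx.1
    _ = f b * (c - b) := by simp [mul_comm]

theorem hasSum_intervalIntegral_of_antitone_of_tendsto_zero {a : ℕ → ℝ} (ha : Antitone a)
    (ha₀ : Tendsto a atTop (𝓝 0)) (hf : IntervalIntegrable f volume 0 (a 0))
    (hf₀ : ∀ x ∈ Icc 0 (a 0), 0 ≤ f x) :
    HasSum (fun n => ∫ x in a (n + 1)..a n, f x) (∫ x in 0..a 0, f x) := by
  have ha_mem : ∀ n, a n ∈ Icc 0 (a 0) := fun n => ⟨ha.le_of_tendsto ha₀ n, ha n.zero_le⟩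
  have hf_sub : ∀ m n, IntervalIntegrable f volume (a m) (a n) := fun m n =>
    hf.mono_set (uIcc_subset_uIcc (by simpa [uIcc_of_le (ha_mem 0).1] using ha_mem m)
      (by simpa [uIcc_of_le (ha_mem 0).1] using ha_mem n))
  have hpartial : ∀ N,
      ∑ n ∈ Finset.range N, ∫ x in a (n + 1)..a n, f x = ∫ x in a N..a 0, f x := fun N => by
    rw [Finset.sum_congr rfl fun n _ => intervalIntegral.integral_symm (a n) (a (n + 1)),
      Finset.sum_neg_distrib, intervalIntegral.sum_integral_adjacent_intervals
      fun k _ => hf_sub k (k + 1), intervalIntegral.integral_symm, neg_neg]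
  rw [hasSum_iff_tendsto_nat_of_nonneg fun n => intervalIntegral.integral_nonneg (ha n.le_succ)
    fun x hx => hf₀ x ⟨(ha_mem _).1.trans hx.1, hx.2.trans (ha_mem n).2⟩]
  simp_rw [hpartial]
  have hcont := intervalIntegral.continuousOn_primitive_interval_left
    ((intervalIntegrable_iff' (by simp)).1 hf)
  rw [uIcc_of_le (ha_mem 0).1] at hcont
  exact (hcont 0 (left_mem_Icc.2 (ha_mem 0).1)).tendsto.comp
    (tendsto_nhdsWithin_iff.2 ⟨ha₀, Eventually.of_forall ha_mem⟩)

end AntitoneIntegrals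

section GammaIntegrand

variable {α : ℝ}

noncomputable def gammaIntegrand (α x : ℝ) : ℝ := exp (-x) * x ^ (α - 1)

theorem gammaIntegrand_nonneg (α : ℝ) {x : ℝ} (hx : 0 ≤ x) : 0 ≤ gammaIntegrand α x := by
  unfold gammaIntegrand; positivity

theorem antitoneOn_gammaIntegrand (hα : α ≤ 1) : AntitoneOn (gammaIntegrand α) (Ioi 0) :=
  fun x hx _ _ hxy => mul_le_mul (exp_le_exp.2 (neg_le_neg hxy))
    (rpow_le_rpow_of_nonpos hx hxy (by linarith)) (rpow_nonneg (hx.out.le.trans hxy) _)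
    (exp_pos _).le

theorem intervalIntegrable_gammaIntegrand (hα : 0 < α) {T : ℝ} (hT : 0 ≤ T) :
    IntervalIntegrable (gammaIntegrand α) volume 0 T :=
  (intervalIntegrable_iff_integrableOn_Ioc_of_le hT).2
    ((GammaIntegral_convergent hα).mono_set Ioc_subset_Ioi_self)

theorem tendsto_intervalIntegral_gammaIntegrand (hα : 0 < α) :
    Tendsto (fun T => ∫ x in 0..T, gammaIntegrand α x) atTop (𝓝 (Gamma α)) := by
  rw [Gamma_eq_integral hα]
  exact intervalIntegral_tendsto_integral_Ioi 0 (GammaIntegral_convergent hα) tendsto_id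

end GammaIntegrand

section PowExpSeries

variable {α T c : ℝ}

noncomputable def powExpTerm (α T c : ℝ) : ℝ := c ^ (-(1 + α)) * exp (-T / c)

noncomputable def powExpSeries (α T : ℝ) : ℝ := ∑' n : ℕ, powExpTerm α T ((n : ℝ) + 1)

theorem summable_nat_add_one_rpow_neg (hα : 0 < α) :
    Summable fun n : ℕ => ((n : ℝ) + 1) ^ (-(1 + α)) := by
  exact_mod_cast (summable_nat_add_iff 1).2
    (Real.summable_nat_rpow.2 (by linarith : -(1 + α) < -1))

theorem summable_rpow_mul_powExpTerm (hα : 0 < α) (hT : 0 ≤ T) :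
    Summable fun n : ℕ => T ^ α * powExpTerm α T ((n : ℝ) + 1) :=
  ((summable_nat_add_one_rpow_neg hα).mul_left (T ^ α)).of_nonneg_of_le
    (fun _ => by unfold powExpTerm; positivity)
    fun _ => mul_le_mul_of_nonneg_left (mul_le_of_le_one_right (by positivity)
      (exp_le_one_iff.2 (by rw [neg_div]; exact neg_nonpos.2 (by positivity)))) (by positivity)

theorem gammaIntegrand_div_mul (hT : 0 < T) (hc : 0 < c) :
    gammaIntegrand α (T / c) * (T / c ^ 2) = T ^ α * powExpTerm α T c := by
  have hTα : T ^ α = T ^ (α - 1) * T := by rw [rpow_sub_one hT.ne']; field_simp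
  have hcα : c ^ (-(1 + α)) = (c ^ (α - 1) * c ^ 2)⁻¹ := by
    rw [rpow_neg hc.le, ← rpow_natCast, ← rpow_add hc]; norm_num; ring_nf
  rw [gammaIntegrand, powExpTerm, div_rpow hT.le hc.le, hTα, hcα, neg_div]
  field_simp

theorem rpow_mul_powExpTerm_div_le (hT : 0 < T) (hc : 0 < c) :
    T ^ α * powExpTerm α T c / c ≤ T ^ (α - 1) * c ^ (-(1 + α)) := by
  have hTα : T ^ α = T ^ (α - 1) * T := by rw [rpow_sub_one hT.ne']; field_simp
  have hx : T / c * exp (-(T / c)) ≤ 1 := by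
    rw [exp_neg, ← div_eq_mul_inv, div_le_one (exp_pos _)]
    linarith [add_one_le_exp (T / c)]
  calc T ^ α * powExpTerm α T c / c
      = T / c * exp (-(T / c)) * (T ^ (α - 1) * c ^ (-(1 + α))) := by
        rw [hTα, powExpTerm, neg_div]; ring
    _ ≤ T ^ (α - 1) * c ^ (-(1 + α)) := mul_le_of_le_one_left (by positivity) hx

theorem rpow_mul_powExpTerm_le_intervalIntegral_add (hα : α ≤ 1) (hT : 0 < T) (hc : 0 < c) :
    T ^ α * powExpTerm α T c
      ≤ (∫ x in T / (c + 1)..T / c, gammaIntegrand α x) + T ^ (α - 1) * c ^ (-(1 + α)) := by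
  have hΔ : T / c - T / (c + 1) = T / c ^ 2 * (c / (c + 1)) := by field_simp; ring
  have hsplit : T ^ α * powExpTerm α T c
      = gammaIntegrand α (T / c) * (T / c - T / (c + 1))
        + T ^ α * powExpTerm α T c / (c + 1) := by
    rw [hΔ, ← mul_assoc, gammaIntegrand_div_mul hT hc]; field_simp
  have hcell := ((antitoneOn_gammaIntegrand hα).mono fun x hx =>
    lt_of_lt_of_le (by positivity) hx.1).mul_sub_le_intervalIntegral
      (by gcongr; linarith : T / (c + 1) ≤ T / c)
  have hterm : 0 ≤ T ^ α * powExpTerm α T c := by unfold powExpTerm; positivity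
  rw [hsplit]
  exact add_le_add hcell ((div_le_div_of_nonneg_left hterm hc (by linarith)).trans
    (rpow_mul_powExpTerm_div_le hT hc))

theorem intervalIntegral_le_rpow_mul_powExpTerm_add (hα : α ≤ 1) (hT : 0 < T) (hc : 1 ≤ c) :
    ∫ x in T / (c + 1)..T / c, gammaIntegrand α x
      ≤ T ^ α * powExpTerm α T (c + 1) + 2 * (T ^ (α - 1) * (c + 1) ^ (-(1 + α))) := by
  have hc₀ : 0 < c := by linarith
  have hΔ : T / c - T / (c + 1) = T / (c + 1) ^ 2 * (1 + 1 / c) := by field_simp; ring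
  have hcell := ((antitoneOn_gammaIntegrand hα).mono fun x hx =>
    lt_of_lt_of_le (by positivity) hx.1).intervalIntegral_le_mul_sub
      (by gcongr; linarith : T / (c + 1) ≤ T / c)
  have hterm : 0 ≤ T ^ α * powExpTerm α T (c + 1) := by unfold powExpTerm; positivity
  rw [hΔ, ← mul_assoc, gammaIntegrand_div_mul hT (by linarith), mul_one_add] at hcell
  refine hcell.trans (add_le_add le_rfl ?_)
  calc T ^ α * powExpTerm α T (c + 1) * (1 / c)
      ≤ 2 * (T ^ α * powExpTerm α T (c + 1) / (c + 1)) := by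
        rw [mul_one_div, mul_div_assoc', div_le_div_iff₀ hc₀ (by linarith)]; nlinarith
    _ ≤ _ := by gcongr; exact rpow_mul_powExpTerm_div_le hT (by linarith)

theorem hasSum_intervalIntegral_gammaIntegrand_div_nat (hα : 0 < α) (hT : 0 ≤ T) :
    HasSum (fun n : ℕ => ∫ x in T / ((n : ℝ) + 1 + 1)..T / ((n : ℝ) + 1), gammaIntegrand α x)
      (∫ x in 0..T, gammaIntegrand α x) := by
  have ha : Antitone fun n : ℕ => T / ((n : ℝ) + 1) := fun m n hmn => by dsimp only; gcongr
  have ha₀ : Tendsto (fun n : ℕ => T / ((n : ℝ) + 1)) atTop (𝓝 0) :=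
    (tendsto_const_div_atTop_nhds_zero_nat T).comp (tendsto_add_atTop_nat 1) |>.congr
      fun n => by simp
  simpa [add_assoc, one_add_one_eq_two] using
    hasSum_intervalIntegral_of_antitone_of_tendsto_zero ha ha₀
      (by simpa using intervalIntegrable_gammaIntegrand hα hT)
      fun x hx => gammaIntegrand_nonneg α hx.1

theorem abs_rpow_mul_powExpSeries_sub_intervalIntegral_le (hα₀ : 0 < α) (hα₁ : α ≤ 1)
    (hT : 0 < T) :
    |T ^ α * powExpSeries α T - ∫ x in 0..T, gammaIntegrand α x|
      ≤ 2 * (∑' n : ℕ, ((n : ℝ) + 1) ^ (-(1 + α))) * T ^ (α - 1) := by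
  have hcell := hasSum_intervalIntegral_gammaIntegrand_div_nat hα₀ hT.le
  have hg := summable_rpow_mul_powExpTerm hα₀ hT.le
  have hE := (summable_nat_add_one_rpow_neg hα₀).mul_left (T ^ (α - 1))
  have hg₁ := (summable_nat_add_iff 1).2 hg
  have hE₁ := (summable_nat_add_iff 1).2 hE
  push_cast at hg₁ hE₁
  have hseries_le := hasSum_le (fun n => rpow_mul_powExpTerm_le_intervalIntegral_add hα₁ hT
    (by positivity)) hg.hasSum (hcell.add hE.hasSum)
  have hintegral_le := hasSum_le (fun n => intervalIntegral_le_rpow_mul_powExpTerm_add hα₁ hT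
    (by linarith [n.cast_nonneg (α := ℝ)])) hcell (hg₁.hasSum.add (hE₁.hasSum.mul_left 2))
  have hseries_split := hg.tsum_eq_zero_add
  have herror_split := hE.tsum_eq_zero_add
  simp only [Nat.cast_zero, Nat.cast_add, Nat.cast_one, zero_add, one_rpow, mul_one]
    at hseries_split herror_split
  have hg₀ : 0 ≤ T ^ α * powExpTerm α T 1 := by unfold powExpTerm; positivity
  have hS : T ^ α * powExpSeries α T = ∑' n : ℕ, T ^ α * powExpTerm α T ((n : ℝ) + 1) :=
    tsum_mul_left.symm
  have hZ : ∑' n : ℕ, T ^ (α - 1) * ((n : ℝ) + 1) ^ (-(1 + α))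
      = T ^ (α - 1) * ∑' n : ℕ, ((n : ℝ) + 1) ^ (-(1 + α)) := tsum_mul_left
  have hZ₀ : 0 ≤ T ^ (α - 1) * ∑' n : ℕ, ((n : ℝ) + 1) ^ (-(1 + α)) :=
    mul_nonneg (by positivity) (tsum_nonneg fun n => by positivity)
  rw [abs_sub_le_iff]
  constructor <;> nlinarith [rpow_nonneg hT.le (α - 1)]

theorem tendsto_rpow_mul_powExpSeries (hα₀ : 0 < α) (hα₁ : α < 1) :
    Tendsto (fun T => T ^ α * powExpSeries α T) atTop (𝓝 (Gamma α)) := by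
  have herr : Tendsto (fun T : ℝ => 2 * (∑' n : ℕ, ((n : ℝ) + 1) ^ (-(1 + α))) * T ^ (α - 1))
      atTop (𝓝 0) := by
    simpa using (tendsto_rpow_neg_atTop (by linarith : 0 < 1 - α)).const_mul
      (2 * ∑' n : ℕ, ((n : ℝ) + 1) ^ (-(1 + α)))
  have hdiff : Tendsto (fun T => T ^ α * powExpSeries α T - ∫ x in 0..T, gammaIntegrand α x)
      atTop (𝓝 0) := squeeze_zero_norm' ((eventually_gt_atTop 0).mono fun T hT =>
    abs_rpow_mul_powExpSeries_sub_intervalIntegral_le hα₀ hα₁.le hT) herr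
  simpa using hdiff.add (tendsto_intervalIntegral_gammaIntegrand hα₀)

end PowExpSeries

theorem Filter.Tendsto.comp_mul_div_self {f : ℝ → ℝ} {c : ℝ} (hf : Tendsto f atTop (𝓝 c))
    (hc : c ≠ 0) {v : ℝ} (hv : 0 < v) : Tendsto (fun t => f (t * v) / f t) atTop (𝓝 1) := by
  have h : Tendsto (fun t => f (t * v) / f t) atTop (𝓝 (c / c)) :=
    (hf.comp (tendsto_id.atTop_mul_const hv)).div hf hc
  rwa [div_self hc] at h

/-- `L` is slowly varying at infinity, and consequently
`R(t) = C₂ ∑_{k=1}^∞ k^{-(1+2(1-H))} e^{-λt/k}` can be written as a slowly varying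
function divided by `t^{2(1-H)}`. -/
theorem stmt3 (H lam C2 : ℝ) (hH : H ∈ Set.Ioo (1 / 2 : ℝ) 1)
    (hlam : 0 < lam) (hC2 : 0 < C2) :
    (∀ v : ℝ, 0 < v →
      Tendsto (fun t : ℝ => OUslow H lam C2 (t * v) / OUslow H lam C2 t)
        atTop (nhds 1)) ∧
    ∃ Lf : ℝ → ℝ,
      (∀ v : ℝ, 0 < v →
        Tendsto (fun t : ℝ => Lf (t * v) / Lf t) atTop (nhds 1)) ∧
      ∀ t : ℝ, 0 < t → C2 * OUsum H lam t = Lf t / t ^ (2 * (1 - H)) := by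
  obtain ⟨hH₁, hH₂⟩ := hH
  -- `OUsum H lam t` is `powExpSeries (2 * (1 - H)) (lam * t)` by definition.
  have hS : Tendsto (fun t => (lam * t) ^ (2 * (1 - H)) * OUsum H lam t) atTop
      (𝓝 (Gamma (2 * (1 - H)))) :=
    (tendsto_rpow_mul_powExpSeries (by linarith) (by linarith)).comp
      (tendsto_id.const_mul_atTop hlam)
  have hL : Tendsto (OUslow H lam C2) atTop (𝓝 (C2 * Gamma (2 * (1 - H)))) :=
    (hS.const_mul C2).congr' <| (eventually_gt_atTop 0).mono fun t ht => by
      simp [OUslow, ht.ne', mul_assoc]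
  refine ⟨fun v hv => hL.comp_mul_div_self (by positivity) hv,
    fun t => C2 * t ^ (2 * (1 - H)) * OUsum H lam t, fun v hv => ?_, fun t ht => ?_⟩
  · refine Tendsto.comp_mul_div_self (f := fun t => C2 * t ^ (2 * (1 - H)) * OUsum H lam t)
      ((hS.const_mul (C2 / lam ^ (2 * (1 - H)))).congr' ?_) (by positivity) hv
    filter_upwards [eventually_gt_atTop 0] with t ht
    rw [mul_rpow hlam.le ht.le]
    field_simp
  · field_simp
end

section
/- As t → ∞, L(t) converges to the finite positive constant C₂·Γ(2(1-H)), where Γ is the Gamma function. -/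
open Filter

/-! With `a = 2(1-H)` and `x = λt`, `L(t) = C₂ x^a ∑_{k ≥ 1} g(k)`, where
`g(u) = u^{-(1+a)} e^{-x/u}` is an unnormalised inverse-gamma density: the substitution
`u = 1/s` turns `∫₀^∞ g` into a Gamma integral, equal to `Γ(a) x^{-a}`. Since `g` increases up to
its mode `x/(1+a)` and decreases afterwards, the sum over the integers differs from the integral
by at most twice the maximum of `g`, which is of order `x^{-1-a}`. After multiplication by `x^a`
the error is `O(1/x)`. -/

open MeasureTheory Set Real Topology

noncomputable def invGammaKernel (a x u : ℝ) : ℝ := u ^ (-(1 + a)) * exp (-x / u)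

section Kernel

variable {a x : ℝ}

lemma invGammaKernel_nonneg {u : ℝ} (hu : 0 ≤ u) : 0 ≤ invGammaKernel a x u := by
  unfold invGammaKernel; positivity

lemma invGammaKernel_zero (ha : -1 < a) : invGammaKernel a x 0 = 0 := by
  rw [invGammaKernel, zero_rpow (by linarith), zero_mul]

lemma invGammaKernel_eq_exp {u : ℝ} (hu : 0 < u) :
    invGammaKernel a x u = exp (-(1 + a) * log u - x / u) := by
  rw [invGammaKernel, rpow_def_of_pos hu, ← exp_add]; ring_nf

lemma invGammaKernel_le_of_mul_le (ha : -1 < a) {u v : ℝ} (hu : 0 < u) (huv : u ≤ v)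
    (hvx : v * (1 + a) ≤ x) : invGammaKernel a x u ≤ invGammaKernel a x v := by
  have hv : 0 < v := hu.trans_le huv
  rw [invGammaKernel_eq_exp hu, invGammaKernel_eq_exp hv, exp_le_exp]
  have hlog : log v - log u ≤ (v - u) / u := by
    have := log_le_sub_one_of_pos (div_pos hv hu)
    rw [log_div hv.ne' hu.ne'] at this
    rwa [sub_div, div_self hu.ne']
  have hgap : (1 + a) * ((v - u) / u) ≤ x / u - x / v := by
    rw [div_sub_div _ _ hu.ne' hv.ne', mul_div_assoc', div_le_div_iff₀ hu (by positivity)]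
    nlinarith [mul_nonneg (mul_nonneg (sub_nonneg.2 hvx) (sub_nonneg.2 huv)) hu.le]
  nlinarith [mul_le_mul_of_nonneg_left hlog (by linarith : (0:ℝ) ≤ 1 + a)]

lemma invGammaKernel_le_of_le_mul (ha : -1 < a) {u v : ℝ} (hu : 0 < u) (huv : u ≤ v)
    (hxu : x ≤ u * (1 + a)) : invGammaKernel a x v ≤ invGammaKernel a x u := by
  have hv : 0 < v := hu.trans_le huv
  rw [invGammaKernel_eq_exp hu, invGammaKernel_eq_exp hv, exp_le_exp]
  have hlog : (v - u) / v ≤ log v - log u := by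
    have := log_le_sub_one_of_pos (div_pos hu hv)
    rw [log_div hu.ne' hv.ne'] at this
    rw [sub_div, div_self hv.ne']
    linarith
  have hgap : x / u - x / v ≤ (1 + a) * ((v - u) / v) := by
    rw [div_sub_div _ _ hu.ne' hv.ne', mul_div_assoc', div_le_div_iff₀ (by positivity) hv]
    nlinarith [mul_nonneg (mul_nonneg (sub_nonneg.2 hxu) (sub_nonneg.2 huv)) hv.le]
  nlinarith [mul_le_mul_of_nonneg_left hlog (by linarith : (0:ℝ) ≤ 1 + a)]

lemma monotoneOn_invGammaKernel (ha : -1 < a) :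
    MonotoneOn (invGammaKernel a x) (Icc 0 (x / (1 + a))) := by
  intro u hu v hv huv
  rcases hu.1.eq_or_lt with rfl | hu0
  · rw [invGammaKernel_zero ha]; exact invGammaKernel_nonneg hv.1
  · exact invGammaKernel_le_of_mul_le ha hu0 huv ((le_div_iff₀ (by linarith)).1 hv.2)

lemma antitoneOn_invGammaKernel (ha : -1 < a) (hx : 0 < x) :
    AntitoneOn (invGammaKernel a x) (Ici (x / (1 + a))) := by
  intro u hu v _ huv
  have hu0 : 0 < u := (div_pos hx (by linarith)).trans_le hu
  exact invGammaKernel_le_of_le_mul ha hu0 huv ((div_le_iff₀ (by linarith)).1 hu)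

-- The integrand of `integral_comp_rpow_Ioi` for the substitution `u = s ^ (-1)`.
lemma abs_mul_rpow_smul_invGammaKernel_rpow_neg_one {s : ℝ} (hs : 0 < s) :
    (|(-1 : ℝ)| * s ^ ((-1 : ℝ) - 1)) • invGammaKernel a x (s ^ (-1 : ℝ)) =
      s ^ (a - 1) * exp (-(x * s)) := by
  rw [invGammaKernel, smul_eq_mul, rpow_neg_one, inv_rpow hs.le, ← rpow_neg hs.le, neg_neg,
    div_inv_eq_mul, ← mul_assoc, abs_neg, abs_one, one_mul, ← rpow_add hs]
  ring_nf

lemma integrableOn_invGammaKernel (ha : 0 < a) (hx : 0 < x) :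
    IntegrableOn (invGammaKernel a x) (Ioi 0) := by
  rw [← integrableOn_Ioi_comp_rpow_iff _ (by norm_num : (-1 : ℝ) ≠ 0)]
  refine (integrableOn_rpow_mul_exp_neg_mul_rpow (by linarith : -1 < a - 1) one_pos hx).congr_fun
    (fun s hs => ?_) measurableSet_Ioi
  dsimp only
  rw [abs_mul_rpow_smul_invGammaKernel_rpow_neg_one hs, rpow_one, neg_mul]

lemma integral_invGammaKernel (ha : 0 < a) (hx : 0 < x) :
    ∫ u in Ioi 0, invGammaKernel a x u = (1 / x) ^ a * Gamma a := by
  rw [← integral_comp_rpow_Ioi _ (by norm_num : (-1 : ℝ) ≠ 0),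
    ← integral_rpow_mul_exp_neg_mul_Ioi ha hx]
  exact setIntegral_congr_fun measurableSet_Ioi
    fun s hs => abs_mul_rpow_smul_invGammaKernel_rpow_neg_one hs

lemma rpow_mul_invGammaKernel_mode (ha : -1 < a) (hx : 0 < x) :
    x ^ a * invGammaKernel a x (x / (1 + a)) = (1 + a) ^ (1 + a) * exp (-(1 + a)) / x := by
  have hb : 0 < 1 + a := by linarith
  rw [invGammaKernel, neg_div, div_div_cancel₀ hx.ne', div_rpow hx.le hb.le, rpow_neg hx.le,
    rpow_neg hb.le, rpow_add hx, rpow_one]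
  field_simp

end Kernel

section Unimodal

variable {f : ℝ → ℝ} {c : ℝ}

lemma apply_le_of_monotoneOn_of_antitoneOn (hc : 0 ≤ c) (hmono : MonotoneOn f (Icc 0 c))
    (hanti : AntitoneOn f (Ici c)) {u : ℝ} (hu : 0 ≤ u) : f u ≤ f c := by
  rcases le_total u c with huc | hcu
  · exact hmono ⟨hu, huc⟩ ⟨hc, le_rfl⟩ huc
  · exact hanti self_mem_Ici hcu hcu

lemma summable_of_antitoneOn_Ici (hanti : AntitoneOn f (Ici c)) (hint : IntegrableOn f (Ioi 0))
    (hf : ∀ t, 0 ≤ t → 0 ≤ f t) : Summable fun n : ℕ => f n :=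
  (hanti.mono (Ici_subset_Ici.2 (Nat.le_ceil c))).summable_of_integrableOn_Ioi
    (hint.mono_set (Ioi_subset_Ioi (Nat.cast_nonneg _)))
    fun t ht => hf t ((Nat.cast_nonneg _).trans ht.le)

lemma integral_Ioi_zero_eq_add_add (hint : IntegrableOn f (Ioi 0)) {a b : ℝ} (ha : 0 ≤ a)
    (hb : 0 ≤ b) :
    (∫ t in (0 : ℝ)..a, f t) + (∫ t in a..b, f t) + ∫ t in Ioi b, f t = ∫ t in Ioi 0, f t := by
  rw [add_assoc, intervalIntegral.integral_interval_add_Ioi (hint.mono_set (Ioi_subset_Ioi ha))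
      (hint.mono_set (Ioi_subset_Ioi hb)),
    intervalIntegral.integral_interval_add_Ioi hint (hint.mono_set (Ioi_subset_Ioi ha))]

lemma tsum_le_integral_add_of_unimodal (hc : 0 ≤ c) (hmono : MonotoneOn f (Icc 0 c))
    (hanti : AntitoneOn f (Ici c)) (hint : IntegrableOn f (Ioi 0)) (hf : ∀ t, 0 ≤ t → 0 ≤ f t) :
    ∑' n : ℕ, f n ≤ (∫ t in Ioi 0, f t) + 2 * f c := by
  -- Left of `m = ⌊c⌋₊` each term is below the integral over the next unit interval, beyond `m + 1`
  -- below the integral over the previous one; `f m` and `f (m + 1)` are bounded by `f c`.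
  set m := ⌊c⌋₊
  have hmc : (m : ℝ) ≤ c := Nat.floor_le hc
  have hcm : c ≤ m + 1 := (Nat.lt_floor_add_one c).le
  have hsum := summable_of_antitoneOn_Ici hanti hint hf
  have hhead : ∑ i ∈ Finset.range m, f i ≤ ∫ t in 0..m, f t := by
    simpa using (hmono.mono (Icc_subset_Icc le_rfl (by simpa using hmc))).sum_le_integral
      (x₀ := 0) (a := m)
  have htail : ∑' n : ℕ, f ↑(n + (m + 1) + 1) ≤ ∫ t in Ioi ((m + 1 : ℕ) : ℝ), f t :=
    (hanti.mono (Ici_subset_Ici.2 (by push_cast; exact hcm))).tsum_comp_add_le_integral (m + 1)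
      (hint.mono_set (Ioi_subset_Ioi (Nat.cast_nonneg _)))
      fun t ht => hf t ((Nat.cast_nonneg _).trans ht.le)
  have hmid : 0 ≤ ∫ t in (m : ℝ)..(m + 1), f t :=
    intervalIntegral.integral_nonneg (by linarith) fun t ht => hf t ((Nat.cast_nonneg _).trans ht.1)
  have hm := apply_le_of_monotoneOn_of_antitoneOn hc hmono hanti (Nat.cast_nonneg m)
  have hm1 := apply_le_of_monotoneOn_of_antitoneOn hc hmono hanti (Nat.cast_nonneg (m + 1))
  have hdecomp : ∑' n : ℕ, f n = ∑ i ∈ Finset.range m, f i + f m + f (m + 1) +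
      ∑' n : ℕ, f ↑(n + (m + 1) + 1) := by
    rw [← hsum.sum_add_tsum_nat_add (m + 2), Finset.sum_range_succ, Finset.sum_range_succ]
    push_cast
    ring_nf
  rw [← integral_Ioi_zero_eq_add_add hint (Nat.cast_nonneg m) (b := m + 1) (by positivity)]
  push_cast at htail hm1 hdecomp
  linarith

lemma integral_le_tsum_add_of_unimodal (hc : 0 ≤ c) (hmono : MonotoneOn f (Icc 0 c))
    (hanti : AntitoneOn f (Ici c)) (hint : IntegrableOn f (Ioi 0)) (hf : ∀ t, 0 ≤ t → 0 ≤ f t) :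
    ∫ t in Ioi 0, f t ≤ ∑' n : ℕ, f (n + 1) + f c := by
  set m := ⌊c⌋₊
  have hmc : (m : ℝ) ≤ c := Nat.floor_le hc
  have hcm : c ≤ m + 1 := (Nat.lt_floor_add_one c).le
  have hsum := summable_of_antitoneOn_Ici hanti hint hf
  have hhead : ∫ t in (0 : ℝ)..m, f t ≤ ∑ i ∈ Finset.range m, f (i + 1) := by
    simpa using (hmono.mono (Icc_subset_Icc le_rfl (by simpa using hmc))).integral_le_sum
      (x₀ := 0) (a := m)
  have hmid : ∫ t in (m : ℝ)..(m + 1), f t ≤ f c := by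
    have hII : IntervalIntegrable f volume m (m + 1) :=
      (intervalIntegrable_iff_integrableOn_Ioc_of_le (by linarith)).2
        (hint.mono_set fun t ht => (Nat.cast_nonneg m).trans_lt ht.1)
    calc ∫ t in (m : ℝ)..(m + 1), f t ≤ ∫ t in (m : ℝ)..(m + 1), f c :=
          intervalIntegral.integral_mono_on (by linarith) hII intervalIntegrable_const
            fun t ht => apply_le_of_monotoneOn_of_antitoneOn hc hmono hanti
              ((Nat.cast_nonneg m).trans ht.1)
      _ = f c := by simp
  have htail : ∫ t in Ioi ((m + 1 : ℕ) : ℝ), f t ≤ ∑' n : ℕ, f ↑(n + (m + 1)) :=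
    (hanti.mono (Ici_subset_Ici.2 (by push_cast; exact hcm))).integral_le_tsum_comp_add (m + 1)
      hsum fun t ht => hf t ((Nat.cast_nonneg _).trans ht.le)
  have hdecomp : ∑' n : ℕ, f (n + 1) = ∑ i ∈ Finset.range m, f (i + 1) +
      ∑' n : ℕ, f ↑(n + (m + 1)) := by
    have := ((summable_nat_add_iff 1).2 hsum).sum_add_tsum_nat_add m
    push_cast at this ⊢
    simpa only [add_assoc] using this.symm
  rw [← integral_Ioi_zero_eq_add_add hint (Nat.cast_nonneg m) (b := m + 1) (by positivity)]
  push_cast at htail hdecomp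
  linarith

theorem abs_tsum_sub_integral_le_of_unimodal (hc : 0 ≤ c) (hmono : MonotoneOn f (Icc 0 c))
    (hanti : AntitoneOn f (Ici c)) (hint : IntegrableOn f (Ioi 0)) (hf : ∀ t, 0 ≤ t → 0 ≤ f t) :
    |∑' n : ℕ, f (n + 1) - ∫ t in Ioi 0, f t| ≤ 2 * f c := by
  have hsum := summable_of_antitoneOn_Ici hanti hint hf
  have h0 : ∑' n : ℕ, f n = f 0 + ∑' n : ℕ, f (n + 1) := by
    simpa using hsum.tsum_eq_zero_add
  have hupper := tsum_le_integral_add_of_unimodal hc hmono hanti hint hf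
  have hlower := integral_le_tsum_add_of_unimodal hc hmono hanti hint hf
  have hf0 := hf 0 le_rfl
  have hfc := hf c hc
  rw [abs_le]
  constructor <;> linarith

end Unimodal

theorem tendsto_rpow_mul_tsum_invGammaKernel {a : ℝ} (ha : 0 < a) :
    Tendsto (fun x => x ^ a * ∑' n : ℕ, invGammaKernel a x (n + 1)) atTop (𝓝 (Gamma a)) := by
  set K := (1 + a) ^ (1 + a) * exp (-(1 + a))
  have hbound : ∀ x > 0, |x ^ a * ∑' n : ℕ, invGammaKernel a x (n + 1) - Gamma a| ≤ 2 * K / x := by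
    intro x hx
    have hdiff := abs_tsum_sub_integral_le_of_unimodal (by positivity)
      (monotoneOn_invGammaKernel (x := x) (by linarith))
      (antitoneOn_invGammaKernel (by linarith) hx)
      (integrableOn_invGammaKernel ha hx) fun t => invGammaKernel_nonneg
    have hxa : 0 < x ^ a := rpow_pos_of_pos hx a
    have hscale : x ^ a * (1 / x) ^ a = 1 := by
      rw [← mul_rpow hx.le (by positivity), mul_one_div_cancel hx.ne', one_rpow]
    calc |x ^ a * ∑' n : ℕ, invGammaKernel a x (n + 1) - Gamma a|
        = x ^ a * |∑' n : ℕ, invGammaKernel a x (n + 1) - ∫ u in Ioi 0, invGammaKernel a x u| := by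
          rw [integral_invGammaKernel ha hx, ← abs_of_pos hxa, ← abs_mul, abs_of_pos hxa, mul_sub,
            ← mul_assoc, hscale, one_mul]
      _ ≤ x ^ a * (2 * invGammaKernel a x (x / (1 + a))) := by gcongr
      _ = 2 * K / x := by rw [mul_left_comm, rpow_mul_invGammaKernel_mode (by linarith) hx]; ring
  rw [tendsto_iff_norm_sub_tendsto_zero]
  refine squeeze_zero' (Eventually.of_forall fun x => norm_nonneg _) ?_
    ((tendsto_const_nhds (x := 2 * K)).div_atTop tendsto_id)
  filter_upwards [eventually_gt_atTop 0] with x hx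
  exact hbound x hx

/-- `L(t) → C₂ Γ(2(1-H))` as `t → ∞`, a finite positive constant. -/
theorem stmt4 (H lam C2 : ℝ) (hH : H ∈ Set.Ioo (1 / 2 : ℝ) 1)
    (hlam : 0 < lam) (hC2 : 0 < C2) :
    Tendsto (fun t : ℝ => OUslow H lam C2 t) atTop
      (nhds (C2 * Real.Gamma (2 * (1 - H)))) ∧
    0 < C2 * Real.Gamma (2 * (1 - H)) := by
  have ha : 0 < 2 * (1 - H) := by linarith [hH.2]
  refine ⟨?_, mul_pos hC2 (Gamma_pos_of_pos ha)⟩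
  refine (((tendsto_rpow_mul_tsum_invGammaKernel ha).comp
    (tendsto_id.const_mul_atTop hlam)).const_mul C2).congr' ?_
  filter_upwards [eventually_gt_atTop 0] with t ht
  rw [OUslow, if_neg ht.ne', mul_assoc]
  rfl
end

section
/- As n → ∞ over the positive integers, n^{-2H} ∑_{j=1}^{n-1} (n-j) · L(j) · j^{-2(1-H)} → C₂ Γ(2(1-H)) / (2H(2H-1)). -/
/-
With `α = 2(1 - H)`, the `j`-th summand is `(1/n) h(j/n) · C₂ a_j`, where `h x = (1 - x) x^{-α}` and
`a_j = (λj)^α S(j)`. The weights `(1/n) h(j/n)` are nonnegative Riemann sums of the decreasing,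
integrable function `h` on `(0, 1]`, with total mass tending to `∫₀¹ h = 1 / (2H(2H - 1))`, and each
individual weight tends to `0`; a Toeplitz argument therefore reduces the claim to `a_j → Γ(α)`.
For that, `c^α ∑_k (k+1)^{-1-α} e^{-c/(k+1)} = ∫₀^∞ φ(c / ⌈c y⌉) dy` with `φ u = u^{1+α} e^{-u}`,
and dominated convergence gives the limit `∫₀^∞ φ(1/y) dy = Γ(α)`.
-/

open Filter

open Filter Set MeasureTheory Topology Real intervalIntegral

noncomputable def rpowMulExpNeg (p u : ℝ) : ℝ := u ^ p * exp (-u)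

section RpowMulExpNeg

variable {p u : ℝ}

lemma rpowMulExpNeg_nonneg (p : ℝ) (hu : 0 ≤ u) : 0 ≤ rpowMulExpNeg p u := by
  unfold rpowMulExpNeg; positivity

lemma rpowMulExpNeg_le_rpow (p : ℝ) (hu : 0 ≤ u) : rpowMulExpNeg p u ≤ u ^ p :=
  mul_le_of_le_one_right (rpow_nonneg hu p) (exp_le_one_iff.mpr (by linarith))

/-- The maximum is attained at `u = p`: raise `u / p ≤ exp (u / p - 1)` to the power `p`. -/
lemma rpowMulExpNeg_le (hp : 0 < p) (hu : 0 ≤ u) : rpowMulExpNeg p u ≤ (p / exp 1) ^ p := by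
  have h := rpow_le_rpow (by positivity) (show u / p ≤ exp (u / p - 1) by
    linarith [add_one_le_exp (u / p - 1)]) hp.le
  rw [div_rpow hu hp.le, ← exp_mul, sub_mul, div_mul_cancel₀ _ hp.ne', one_mul,
    div_le_iff₀ (by positivity)] at h
  rw [rpowMulExpNeg, div_rpow hp.le (exp_pos 1).le, exp_one_rpow, le_div_iff₀ (exp_pos p)]
  calc u ^ p * exp (-u) * exp p ≤ exp (u - p) * p ^ p * exp (-u) * exp p := by gcongr
    _ = p ^ p := by rw [mul_comm (exp (u - p)), mul_assoc, mul_assoc, ← exp_add, ← exp_add]; simp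

lemma integral_rpowMulExpNeg_inv {α : ℝ} (hα : 0 < α) :
    ∫ y in Ioi (0 : ℝ), rpowMulExpNeg (1 + α) y⁻¹ = Gamma α := by
  rw [Gamma_eq_integral hα, ← integral_comp_rpow_Ioi (fun u => exp (-u) * u ^ (α - 1))
    (p := -1) (by norm_num)]
  refine setIntegral_congr_fun measurableSet_Ioi fun x (hx : 0 < x) => ?_
  simp only [rpowMulExpNeg, smul_eq_mul, rpow_neg_one, abs_neg, abs_one, one_mul,
    inv_rpow hx.le, ← rpow_neg hx.le]
  rw [show -(1 + α) = (-1 - 1) + -(α - 1) by ring, rpow_add hx]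
  ring

end RpowMulExpNeg

section Staircase

variable {c : ℝ}

lemma Nat.ceil_mul_eq_add_one_iff (hc : 0 < c) (k : ℕ) (y : ℝ) :
    ⌈c * y⌉₊ = k + 1 ↔ y ∈ Ioc (k / c) ((k + 1) / c) := by
  rw [Nat.ceil_eq_iff k.succ_ne_zero, mem_Ioc, div_lt_iff₀ hc, le_div_iff₀ hc, mul_comm y]
  simp

lemma measurable_rpowMulExpNeg_div_ceil (p c : ℝ) :
    Measurable fun y : ℝ => rpowMulExpNeg p (c / ⌈c * y⌉₊) :=
  (Measurable.of_discrete (f := fun k : ℕ => rpowMulExpNeg p (c / k))).comp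
    (Nat.measurable_ceil.comp (measurable_id.const_mul c))

lemma rpowMulExpNeg_div_ceil_le {p : ℝ} (hp : 0 < p) (hc : 0 < c) {y : ℝ} (hy : 0 < y) :
    rpowMulExpNeg p (c / ⌈c * y⌉₊) ≤ min ((p / exp 1) ^ p) (y ^ (-p)) := by
  have hceil : 0 < (⌈c * y⌉₊ : ℝ) := by exact_mod_cast Nat.ceil_pos.mpr (by positivity)
  have hu : 0 ≤ c / ⌈c * y⌉₊ := by positivity
  have hle : c / ⌈c * y⌉₊ ≤ y⁻¹ := by
    rw [div_le_iff₀ hceil, ← div_eq_inv_mul, le_div_iff₀ hy]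
    exact Nat.le_ceil _
  refine le_min (rpowMulExpNeg_le hp hu) ((rpowMulExpNeg_le_rpow p hu).trans ?_)
  rw [rpow_neg hy.le, ← inv_rpow hy.le]
  exact rpow_le_rpow hu hle hp.le

lemma integrableOn_min_rpow_neg {p M : ℝ} (hp : 1 < p) (hM : 0 ≤ M) :
    IntegrableOn (fun y : ℝ => min M (y ^ (-p))) (Ioi 0) := by
  have hmeas : AEStronglyMeasurable (fun y : ℝ => min M (y ^ (-p))) volume := by
    fun_prop
  rw [← Ioc_union_Ioi_eq_Ioi zero_le_one]
  refine IntegrableOn.union ?_ ?_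
  · refine Integrable.mono' (integrableOn_const (C := M) (by simp)) hmeas.restrict
      (ae_restrict_of_forall_mem measurableSet_Ioc fun y hy => ?_)
    rw [norm_of_nonneg (le_min hM (rpow_nonneg hy.1.le _))]
    exact min_le_left _ _
  · refine Integrable.mono' (integrableOn_Ioi_rpow_of_lt (a := -p) (by linarith) one_pos)
      hmeas.restrict (ae_restrict_of_forall_mem measurableSet_Ioi fun y (hy : 1 < y) => ?_)
    rw [norm_of_nonneg (le_min hM (rpow_nonneg (by linarith) _))]
    exact min_le_right _ _

lemma integrableOn_rpowMulExpNeg_div_ceil {p : ℝ} (hp : 1 < p) (hc : 0 < c) :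
    IntegrableOn (fun y : ℝ => rpowMulExpNeg p (c / ⌈c * y⌉₊)) (Ioi 0) :=
  Integrable.mono' (integrableOn_min_rpow_neg (M := (p / exp 1) ^ p) hp (by positivity))
    (measurable_rpowMulExpNeg_div_ceil p c).aestronglyMeasurable.restrict
    (ae_restrict_of_forall_mem measurableSet_Ioi fun y (hy : 0 < y) => by
      rw [norm_of_nonneg (rpowMulExpNeg_nonneg p (by positivity))]
      exact rpowMulExpNeg_div_ceil_le (by linarith) hc hy)

/-- On `(k / c, (k + 1) / c]` the integrand is the constant `rpowMulExpNeg (1 + α) (c / (k + 1))`,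
and these intervals tile `(0, ∞)`. -/
lemma rpow_mul_tsum_eq_integral {α : ℝ} (hα : 0 < α) (hc : 0 < c) :
    c ^ α * ∑' k : ℕ, ((k : ℝ) + 1) ^ (-(1 + α)) * exp (-c / ((k : ℝ) + 1)) =
      ∫ y in Ioi 0, rpowMulExpNeg (1 + α) (c / ⌈c * y⌉₊) := by
  set S : ℕ → Set ℝ := fun k => Ioc (k / c) ((k + 1) / c)
  have hdisj : Pairwise (Function.onFun Disjoint S) := fun k m hkm =>
    Set.disjoint_left.mpr fun y hk hm => hkm <| Nat.succ_injective <|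
      ((Nat.ceil_mul_eq_add_one_iff hc k y).mpr hk).symm.trans
        ((Nat.ceil_mul_eq_add_one_iff hc m y).mpr hm)
  have hunion : ⋃ k, S k = Ioi 0 := by
    ext y
    refine ⟨fun hy => ?_, fun (hy : 0 < y) => ?_⟩
    · obtain ⟨k, hk⟩ := mem_iUnion.mp hy
      exact lt_of_le_of_lt (by positivity) hk.1
    · have hpos : 0 < ⌈c * y⌉₊ := Nat.ceil_pos.mpr (by positivity)
      exact mem_iUnion.mpr ⟨⌈c * y⌉₊ - 1,
        (Nat.ceil_mul_eq_add_one_iff hc _ y).mp (by omega)⟩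
  have hcell (k : ℕ) : ∫ y in S k, rpowMulExpNeg (1 + α) (c / ⌈c * y⌉₊) =
      c ^ α * (((k : ℝ) + 1) ^ (-(1 + α)) * exp (-c / ((k : ℝ) + 1))) := by
    rw [setIntegral_congr_fun measurableSet_Ioc (g := fun _ => rpowMulExpNeg (1 + α) (c / (k + 1)))
      fun y hy => by simp [(Nat.ceil_mul_eq_add_one_iff hc k y).mpr hy]]
    rw [setIntegral_const, Real.volume_real_Ioc_of_le (by gcongr; linarith), smul_eq_mul,
      rpowMulExpNeg, div_rpow hc.le (by positivity), rpow_add hc, rpow_one,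
      rpow_neg (by positivity), neg_div]
    field_simp
    ring
  rw [← hunion, integral_iUnion (fun _ => measurableSet_Ioc) hdisj
    (hunion ▸ integrableOn_rpowMulExpNeg_div_ceil (by linarith) hc), ← tsum_mul_left]
  exact tsum_congr fun k => (hcell k).symm

lemma tendsto_div_ceil_mul {y : ℝ} (hy : 0 < y) :
    Tendsto (fun c : ℝ => c / ⌈c * y⌉₊) atTop (𝓝 y⁻¹) := by
  have h := ((tendsto_nat_ceil_div_atTop (R := ℝ)).comp
    (tendsto_id.atTop_mul_const hy)).inv₀ one_ne_zero
  rw [inv_one] at h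
  rw [← mul_one y⁻¹]
  refine (h.const_mul y⁻¹).congr' ((eventually_gt_atTop 0).mono fun c hc => ?_)
  simp only [Function.comp_apply, id, inv_div]
  field_simp

end Staircase

theorem tendsto_rpow_mul_tsum_rpow_mul_exp {α : ℝ} (hα : 0 < α) :
    Tendsto (fun c : ℝ => c ^ α * ∑' k : ℕ, ((k : ℝ) + 1) ^ (-(1 + α)) * exp (-c / ((k : ℝ) + 1)))
      atTop (𝓝 (Gamma α)) := by
  rw [← integral_rpowMulExpNeg_inv hα]
  have hp : 0 < 1 + α := by linarith
  refine (tendsto_integral_filter_of_dominated_convergence _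
    (Eventually.of_forall fun c => (measurable_rpowMulExpNeg_div_ceil _ c).aestronglyMeasurable)
    ((eventually_gt_atTop 0).mono fun c hc =>
      ae_restrict_of_forall_mem measurableSet_Ioi fun y (hy : 0 < y) => ?_)
    (integrableOn_min_rpow_neg (p := 1 + α) (M := ((1 + α) / exp 1) ^ (1 + α)) (by linarith)
      (by positivity))
    (ae_restrict_of_forall_mem measurableSet_Ioi fun y (hy : 0 < y) => ?_)).congr'
    ((eventually_gt_atTop 0).mono fun c hc => (rpow_mul_tsum_eq_integral hα hc).symm)
  · rw [norm_of_nonneg (rpowMulExpNeg_nonneg _ (by positivity))]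
    exact rpowMulExpNeg_div_ceil_le hp hc hy
  · exact ((continuous_rpow_const (by linarith)).continuousAt.mul
      (continuous_exp.comp continuous_neg).continuousAt).tendsto.comp (tendsto_div_ceil_mul hy)

section RiemannSums

variable {f : ℝ → ℝ} {a δ : ℝ} {N : ℕ}

lemma Icc_add_mul_subset_Icc_add_mul (hδ : 0 ≤ δ) {k : ℕ} (hk : k < N) :
    Icc (a + k * δ) (a + (k + 1 : ℕ) * δ) ⊆ Icc a (a + N * δ) :=
  Icc_subset_Icc (le_add_of_nonneg_right (by positivity)) (by gcongr; exact_mod_cast hk)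

theorem AntitoneOn.integral_le_sum_mul (hf : AntitoneOn f (Icc a (a + N * δ))) (hδ : 0 ≤ δ) :
    ∫ x in a..a + N * δ, f x ≤ ∑ k ∈ Finset.range N, f (a + k * δ) * δ := by
  have hcell (k : ℕ) (hk : k < N) :
      AntitoneOn f (Icc (a + k * δ) (a + (k + 1 : ℕ) * δ)) :=
    hf.mono (Icc_add_mul_subset_Icc_add_mul hδ hk)
  have hle (k : ℕ) : a + k * δ ≤ a + (k + 1 : ℕ) * δ := by gcongr; simp
  have hint (k : ℕ) (hk : k < N) :
      IntervalIntegrable f volume (a + k * δ) (a + (k + 1 : ℕ) * δ) :=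
    AntitoneOn.intervalIntegrable (by rw [uIcc_of_le (hle k)]; exact hcell k hk)
  calc ∫ x in a..a + N * δ, f x
      = ∑ k ∈ Finset.range N, ∫ x in a + k * δ..a + (k + 1 : ℕ) * δ, f x := by
        rw [sum_integral_adjacent_intervals (a := fun k : ℕ => a + k * δ) hint]
        simp
    _ ≤ ∑ k ∈ Finset.range N, ∫ _ in a + k * δ..a + (k + 1 : ℕ) * δ, f (a + k * δ) := by
        gcongr with k hk
        have hk := Finset.mem_range.mp hk
        exact integral_mono_on (hle k) (hint k hk) (by simp)
          fun x hx => hcell k hk ⟨le_rfl, hle k⟩ hx hx.1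
    _ = ∑ k ∈ Finset.range N, f (a + k * δ) * δ := by
        simp only [intervalIntegral.integral_const, smul_eq_mul]
        congr! 1 with k; push_cast; ring

theorem AntitoneOn.sum_mul_le_integral (hf : AntitoneOn f (Ioc a (a + N * δ)))
    (hfi : IntervalIntegrable f volume a (a + N * δ)) (hδ : 0 ≤ δ) :
    ∑ k ∈ Finset.range N, f (a + (k + 1 : ℕ) * δ) * δ ≤ ∫ x in a..a + N * δ, f x := by
  have hle (k : ℕ) : a + k * δ ≤ a + (k + 1 : ℕ) * δ := by gcongr; simp
  have hcell (k : ℕ) (hk : k < N) :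
      IntervalIntegrable f volume (a + k * δ) (a + (k + 1 : ℕ) * δ) :=
    hfi.mono_set (by
      rw [uIcc_of_le (hle k), uIcc_of_le (le_add_of_nonneg_right (by positivity))]
      exact Icc_add_mul_subset_Icc_add_mul hδ hk)
  calc ∑ k ∈ Finset.range N, f (a + (k + 1 : ℕ) * δ) * δ
      = ∑ k ∈ Finset.range N, ∫ _ in a + k * δ..a + (k + 1 : ℕ) * δ, f (a + (k + 1 : ℕ) * δ) := by
        simp only [intervalIntegral.integral_const, smul_eq_mul]
        congr! 1 with k; push_cast; ring
    _ ≤ ∑ k ∈ Finset.range N, ∫ x in a + k * δ..a + (k + 1 : ℕ) * δ, f x := by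
        gcongr with k hk
        have hk := Finset.mem_range.mp hk
        refine integral_mono_on_of_le_Ioo (hle k) (by simp) (hcell k hk) fun x hx => ?_
        have hsub := Icc_add_mul_subset_Icc_add_mul (a := a) hδ hk
        have hx' : x ∈ Ioc a (a + N * δ) :=
          ⟨(hsub ⟨le_rfl, hle k⟩).1.trans_lt hx.1, (hsub ⟨hx.1.le, hx.2.le⟩).2⟩
        exact hf hx' ⟨hx'.1.trans hx.2, (hsub ⟨hle k, le_rfl⟩).2⟩ hx.2.le
    _ = ∫ x in a..a + N * δ, f x := by
        rw [sum_integral_adjacent_intervals (a := fun k : ℕ => a + k * δ) hcell]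
        simp

variable {h : ℝ → ℝ}

lemma AntitoneOn.nonneg_of_nonneg_one (hh : AntitoneOn h (Ioc 0 1)) (h1 : 0 ≤ h 1) {x : ℝ}
    (hx : x ∈ Ioc 0 1) : 0 ≤ h x :=
  h1.trans (hh hx ⟨one_pos, le_rfl⟩ hx.2)

lemma Finset.sum_Icc_one_sub_one_eq_sum_range {M : Type*} [AddCommMonoid M] (g : ℕ → M) (n : ℕ) :
    ∑ j ∈ Finset.Icc 1 (n - 1), g j = ∑ k ∈ Finset.range (n - 1), g (k + 1) := by
  rw [Finset.range_eq_Ico, Finset.sum_Ico_add', Finset.Ico_add_one_right_eq_Icc]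

theorem AntitoneOn.sum_div_le_integral (hh : AntitoneOn h (Ioc 0 1)) (h1 : 0 ≤ h 1)
    (hhi : IntervalIntegrable h volume 0 1) {n : ℕ} (hn : 0 < n) :
    ∑ j ∈ Finset.Icc 1 (n - 1), h (j / n) / n ≤ ∫ x in (0 : ℝ)..1, h x := by
  have hn' : (n : ℝ) ≠ 0 := by positivity
  have hstep : (0 : ℝ) + n * (1 / n) = 1 := by field_simp; ring
  have key := AntitoneOn.sum_mul_le_integral (N := n) (a := 0) (δ := 1 / n) (f := h)
    (by rwa [hstep]) (by rwa [hstep]) (by positivity)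
  rw [hstep] at key
  simp only [zero_add, mul_one_div] at key
  obtain ⟨m, rfl⟩ : ∃ m, n = m + 1 := ⟨n - 1, by omega⟩
  calc ∑ j ∈ Finset.Icc 1 (m + 1 - 1), h (j / (m + 1 : ℕ)) / (m + 1 : ℕ)
      = ∑ k ∈ Finset.range m, h ((k + 1 : ℕ) / (m + 1 : ℕ)) / (m + 1 : ℕ) :=
        Finset.sum_Icc_one_sub_one_eq_sum_range _ _
    _ ≤ ∑ k ∈ Finset.range (m + 1), h ((k + 1 : ℕ) / (m + 1 : ℕ)) / (m + 1 : ℕ) := by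
        rw [Finset.sum_range_succ, div_self hn']
        exact le_add_of_nonneg_right (by positivity)
    _ ≤ ∫ x in (0 : ℝ)..1, h x := key

theorem AntitoneOn.integral_le_sum_div (hh : AntitoneOn h (Ioc 0 1)) {n : ℕ} (hn : 0 < n) :
    ∫ x in (1 / n : ℝ)..1, h x ≤ ∑ j ∈ Finset.Icc 1 (n - 1), h (j / n) / n := by
  obtain ⟨m, rfl⟩ : ∃ m, n = m + 1 := ⟨n - 1, by omega⟩
  have hstep : (1 / (m + 1 : ℕ) : ℝ) + m * (1 / (m + 1 : ℕ)) = 1 := by field_simp; push_cast; ring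
  have hsub : Icc (1 / (m + 1 : ℕ) : ℝ) 1 ⊆ Ioc 0 1 :=
    (Icc_subset_Ioc_iff ((div_le_one₀ (by positivity)).mpr (by simp))).mpr ⟨by positivity, le_rfl⟩
  have key := AntitoneOn.integral_le_sum_mul (N := m) (a := 1 / (m + 1 : ℕ)) (δ := 1 / (m + 1 : ℕ))
    (f := h) (by rw [hstep]; exact hh.mono hsub) (by positivity)
  rw [hstep] at key
  refine key.trans_eq ?_
  rw [Finset.sum_Icc_one_sub_one_eq_sum_range, Nat.add_sub_cancel]
  refine Finset.sum_congr rfl fun k _ => ?_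
  rw [mul_one_div]
  congr 2
  push_cast
  ring

lemma tendsto_integral_zero_one_div (hhi : IntervalIntegrable h volume 0 1) :
    Tendsto (fun n : ℕ => ∫ x in (0 : ℝ)..1 / n, h x) atTop (𝓝 0) := by
  have hcont := continuousOn_primitive_interval' hhi (left_mem_uIcc (a := (0 : ℝ)) (b := 1))
  rw [uIcc_of_le zero_le_one] at hcont
  have hlim : Tendsto (fun n : ℕ => (1 / n : ℝ)) atTop (𝓝[Icc 0 1] 0) :=
    tendsto_nhdsWithin_iff.mpr ⟨tendsto_one_div_atTop_nhds_zero_nat,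
      (eventually_ge_atTop 1).mono fun n hn =>
        ⟨by positivity, div_le_one_of_le₀ (by exact_mod_cast hn) (Nat.cast_nonneg n)⟩⟩
  simpa [Function.comp_def] using (hcont 0 ⟨le_rfl, zero_le_one⟩).tendsto.comp hlim

theorem AntitoneOn.tendsto_sum_div (hh : AntitoneOn h (Ioc 0 1)) (h1 : 0 ≤ h 1)
    (hhi : IntervalIntegrable h volume 0 1) :
    Tendsto (fun n : ℕ => ∑ j ∈ Finset.Icc 1 (n - 1), h (j / n) / n) atTop
      (𝓝 (∫ x in (0 : ℝ)..1, h x)) := by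
  have hlow : Tendsto (fun n : ℕ => ∫ x in (1 / n : ℝ)..1, h x) atTop
      (𝓝 (∫ x in (0 : ℝ)..1, h x)) := by
    have := (tendsto_integral_zero_one_div hhi).const_sub (∫ x in (0 : ℝ)..1, h x)
    rw [sub_zero] at this
    refine this.congr fun n => integral_interval_sub_left hhi (hhi.mono_set ?_)
    exact uIcc_subset_uIcc left_mem_uIcc (by
      rw [uIcc_of_le zero_le_one, one_div]; exact ⟨by positivity, Nat.cast_inv_le_one n⟩)
  exact tendsto_of_tendsto_of_tendsto_of_le_of_le' hlow tendsto_const_nhds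
    ((eventually_gt_atTop 0).mono fun n hn => hh.integral_le_sum_div hn)
    ((eventually_gt_atTop 0).mono fun n hn => hh.sum_div_le_integral h1 hhi hn)

end RiemannSums

lemma abs_sum_mul_sub_le {ι : Type*} (s t : Finset ι) {w u : ι → ℝ} {A δ : ℝ}
    (hw : ∀ j ∈ s, 0 ≤ w j) (hδ : 0 ≤ δ) (hu : ∀ j ∈ s, j ∉ t → |u j - A| ≤ δ) :
    |∑ j ∈ s, w j * (u j - A)| ≤ ∑ j ∈ t, |w j| * |u j - A| + δ * ∑ j ∈ s, w j := by
  classical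
  calc |∑ j ∈ s, w j * (u j - A)|
      ≤ ∑ j ∈ s, |w j| * |u j - A| := by
        simpa only [abs_mul] using Finset.abs_sum_le_sum_abs (fun j => w j * (u j - A)) s
    _ = ∑ j ∈ s.filter (· ∈ t), |w j| * |u j - A| + ∑ j ∈ s.filter (· ∉ t), w j * |u j - A| := by
        rw [← Finset.sum_filter_add_sum_filter_not s (· ∈ t)]
        congr 1
        refine Finset.sum_congr rfl fun j hj => ?_
        rw [abs_of_nonneg (hw j (Finset.mem_filter.mp hj).1)]
    _ ≤ ∑ j ∈ t, |w j| * |u j - A| + ∑ j ∈ s, w j * δ := by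
        refine add_le_add (Finset.sum_le_sum_of_subset_of_nonneg
          (fun j hj => (Finset.mem_filter.mp hj).2) fun _ _ _ => by positivity) ?_
        calc ∑ j ∈ s.filter (· ∉ t), w j * |u j - A|
            ≤ ∑ j ∈ s.filter (· ∉ t), w j * δ := Finset.sum_le_sum fun j hj => by
              obtain ⟨hjs, hjt⟩ := Finset.mem_filter.mp hj
              exact mul_le_mul_of_nonneg_left (hu j hjs hjt) (hw j hjs)
          _ ≤ ∑ j ∈ s, w j * δ := Finset.sum_le_sum_of_subset_of_nonneg (Finset.filter_subset _ _)
              fun j hj _ => mul_nonneg (hw j hj) hδ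
    _ = _ := by rw [Finset.mul_sum]; simp_rw [mul_comm δ]

theorem tendsto_sum_mul_of_tendsto {w : ℕ → ℕ → ℝ} {s : ℕ → Finset ℕ} {u : ℕ → ℝ} {W A : ℝ}
    (hw : ∀ n, ∀ j ∈ s n, 0 ≤ w n j) (hcol : ∀ j, Tendsto (fun n => w n j) atTop (𝓝 0))
    (hW : Tendsto (fun n => ∑ j ∈ s n, w n j) atTop (𝓝 W)) (hu : Tendsto u atTop (𝓝 A)) :
    Tendsto (fun n => ∑ j ∈ s n, w n j * u j) atTop (𝓝 (W * A)) := by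
  suffices h : Tendsto (fun n => ∑ j ∈ s n, w n j * (u j - A)) atTop (𝓝 0) by
    refine (zero_add (W * A) ▸ h.add (hW.mul_const A)).congr fun n => ?_
    simp [mul_sub, Finset.sum_mul]
  have hW0 : 0 ≤ W := ge_of_tendsto' hW fun n => Finset.sum_nonneg (hw n)
  rw [Metric.tendsto_atTop]
  intro ε hε
  have hδ : 0 < ε / (W + 2) := by positivity
  obtain ⟨J, hJ⟩ := Metric.tendsto_atTop.mp hu _ hδ
  have hhead : Tendsto (fun n => ∑ j ∈ Finset.range J, |w n j| * |u j - A|) atTop (𝓝 0) := by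
    simpa using tendsto_finsetSum _ fun j _ => (hcol j).abs.mul_const |u j - A|
  obtain ⟨N, hN⟩ := eventually_atTop.mp ((hhead.eventually (gt_mem_nhds hδ)).and
    (hW.eventually (gt_mem_nhds (lt_add_one W))))
  refine ⟨N, fun n hn => ?_⟩
  obtain ⟨hhead_n, hW_n⟩ := hN n hn
  rw [Real.dist_eq, sub_zero]
  calc |∑ j ∈ s n, w n j * (u j - A)|
      ≤ ∑ j ∈ Finset.range J, |w n j| * |u j - A| + ε / (W + 2) * ∑ j ∈ s n, w n j :=
        abs_sum_mul_sub_le _ _ (hw n) hδ.le fun j _ hj =>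
          (hJ j (not_lt.mp (Finset.mem_range.not.mp hj))).le
    _ < ε / (W + 2) + ε / (W + 2) * (W + 1) := by gcongr
    _ = ε := by field_simp; ring

section AntitoneWeights

variable {h : ℝ → ℝ}

lemma div_natCast_mem_Ioc {j n : ℕ} (hj : 0 < j) (hjn : j ≤ n) : (j / n : ℝ) ∈ Ioc 0 1 :=
  ⟨by have : 0 < n := hj.trans_le hjn; positivity,
    div_le_one_of_le₀ (by exact_mod_cast hjn) (Nat.cast_nonneg n)⟩

lemma AntitoneOn.tendsto_div_natCast (hh : AntitoneOn h (Ioc 0 1)) (h1 : 0 ≤ h 1)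
    (hhi : IntervalIntegrable h volume 0 1) (j : ℕ) :
    Tendsto (fun n : ℕ => h (j / n) / n) atTop (𝓝 0) := by
  rcases Nat.eq_zero_or_pos j with rfl | hj
  · simpa using tendsto_const_div_atTop_nhds_zero_nat (h 0)
  refine squeeze_zero' ?_ ?_ (tendsto_integral_zero_one_div hhi)
  · filter_upwards [eventually_ge_atTop j] with n hn
    exact div_nonneg (hh.nonneg_of_nonneg_one h1 (div_natCast_mem_Ioc hj hn)) (Nat.cast_nonneg n)
  · filter_upwards [eventually_ge_atTop j] with n hn
    have hn0 : 0 < n := hj.trans_le hn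
    have h1n : (1 / n : ℝ) ∈ Ioc 0 1 := by simpa using div_natCast_mem_Ioc one_pos hn0
    have hcell := AntitoneOn.sum_mul_le_integral (N := 1) (a := 0) (δ := 1 / n) (f := h)
      (by simpa using hh.mono (Ioc_subset_Ioc_right h1n.2))
      (hhi.mono_set (uIcc_subset_uIcc left_mem_uIcc (by
        rw [uIcc_of_le zero_le_one]; simpa using Ioc_subset_Icc_self h1n)))
      (by positivity)
    simp only [Finset.range_one, Finset.sum_singleton, Nat.cast_one, zero_add,
      mul_one_div] at hcell
    refine le_trans ?_ hcell
    gcongr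
    exact hh h1n (div_natCast_mem_Ioc hj hn) (by gcongr; exact_mod_cast hj)

theorem AntitoneOn.tendsto_sum_div_mul (hh : AntitoneOn h (Ioc 0 1)) (h1 : 0 ≤ h 1)
    (hhi : IntervalIntegrable h volume 0 1) {u : ℕ → ℝ} {A : ℝ} (hu : Tendsto u atTop (𝓝 A)) :
    Tendsto (fun n : ℕ => ∑ j ∈ Finset.Icc 1 (n - 1), h (j / n) / n * u j) atTop
      (𝓝 ((∫ x in (0 : ℝ)..1, h x) * A)) := by
  refine tendsto_sum_mul_of_tendsto (fun n j hj => ?_) (hh.tendsto_div_natCast h1 hhi)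
    (hh.tendsto_sum_div h1 hhi) hu
  obtain ⟨hj1, hjn⟩ := Finset.mem_Icc.mp hj
  exact div_nonneg (hh.nonneg_of_nonneg_one h1 (div_natCast_mem_Ioc hj1 (by omega)))
    (Nat.cast_nonneg n)

end AntitoneWeights

section OneSubMulRpowNeg

variable {α : ℝ}

lemma antitoneOn_one_sub_mul_rpow_neg (hα : 0 ≤ α) :
    AntitoneOn (fun x : ℝ => (1 - x) * x ^ (-α)) (Ioc 0 1) := fun x hx y hy hxy =>
  mul_le_mul (by linarith) (rpow_le_rpow_of_nonpos hx.1 hxy (by linarith))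
    (rpow_nonneg hy.1.le _) (by linarith [hx.2])

lemma intervalIntegrable_one_sub_mul_rpow_neg (hα : α < 1) (a b : ℝ) :
    IntervalIntegrable (fun x : ℝ => (1 - x) * x ^ (-α)) volume a b :=
  (intervalIntegral.intervalIntegrable_rpow' (by linarith)).continuousOn_mul (by fun_prop)

lemma integral_one_sub_mul_rpow_neg (hα : α < 1) :
    ∫ x in (0 : ℝ)..1, (1 - x) * x ^ (-α) = 1 / ((1 - α) * (2 - α)) := by
  have hsplit : EqOn (fun x : ℝ => (1 - x) * x ^ (-α)) (fun x => x ^ (-α) - x ^ (-α + 1))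
      (uIcc 0 1) := fun x hx => by
    rw [uIcc_of_le zero_le_one] at hx
    rcases hx.1.eq_or_lt with rfl | hx0
    · simp [zero_rpow (by linarith : -α + 1 ≠ 0)]
    · simp only [rpow_add hx0, rpow_one]; ring
  rw [intervalIntegral.integral_congr hsplit, intervalIntegral.integral_sub
      (intervalIntegral.intervalIntegrable_rpow' (by linarith))
      (intervalIntegral.intervalIntegrable_rpow' (by linarith)),
    integral_rpow (Or.inl (by linarith)), integral_rpow (Or.inl (by linarith)),
    zero_rpow (by linarith), zero_rpow (by linarith), one_rpow, one_rpow,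
    show -α + 1 = 1 - α by ring, show 1 - α + 1 = 2 - α by ring]
  have h1 : 1 - α ≠ 0 := by linarith
  have h2 : 2 - α ≠ 0 := by linarith
  field_simp
  ring

end OneSubMulRpowNeg

lemma OUslow_summand_eq (H lam C2 : ℝ) {n j : ℕ} (hj : 1 ≤ j) (hjn : j ≤ n) :
    (n : ℝ) ^ (-(2 * H)) * (((n : ℝ) - j) * OUslow H lam C2 j * (j : ℝ) ^ (-(2 * (1 - H)))) =
      (1 - j / n) * ((j : ℝ) / n) ^ (-(2 * (1 - H))) / n *
        (C2 * ((lam * j) ^ (2 * (1 - H)) * OUsum H lam j)) := by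
  have hj0 : (0 : ℝ) < j := by exact_mod_cast hj
  have hn0 : (0 : ℝ) < n := by exact_mod_cast hj.trans hjn
  rw [OUslow, if_neg hj0.ne', div_rpow hj0.le hn0.le,
    show -(2 * H) = 2 * (1 - H) + -1 + -1 by ring, rpow_add hn0, rpow_add hn0,
    rpow_neg hn0.le (2 * (1 - H)), rpow_neg_one]
  field_simp

theorem stmt9_general (H lam C2 : ℝ) (hH : H ∈ Set.Ioo (1 / 2 : ℝ) 1)
    (hlam : 0 < lam) :
    Tendsto (fun n : ℕ =>
        (n : ℝ) ^ (-(2 * H)) *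
          ∑ j ∈ Finset.Icc 1 (n - 1),
            ((n : ℝ) - (j : ℝ)) * OUslow H lam C2 (j : ℝ) * (j : ℝ) ^ (-(2 * (1 - H))))
      atTop (nhds (C2 * Real.Gamma (2 * (1 - H)) / (2 * H * (2 * H - 1)))) := by
  obtain ⟨hH1, hH2⟩ := hH
  have hα0 : 0 < 2 * (1 - H) := by linarith
  have hα1 : 2 * (1 - H) < 1 := by linarith
  have hL : Tendsto (fun j : ℕ => C2 * ((lam * j) ^ (2 * (1 - H)) * OUsum H lam j)) atTop
      (𝓝 (C2 * Gamma (2 * (1 - H)))) :=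
    ((tendsto_rpow_mul_tsum_rpow_mul_exp hα0).comp
      (tendsto_natCast_atTop_atTop.const_mul_atTop hlam)).const_mul C2
  have hlim := (antitoneOn_one_sub_mul_rpow_neg hα0.le).tendsto_sum_div_mul (by simp)
    (intervalIntegrable_one_sub_mul_rpow_neg hα1 0 1) hL
  rw [integral_one_sub_mul_rpow_neg hα1] at hlim
  convert hlim using 1
  · ext n
    rw [Finset.mul_sum]
    exact Finset.sum_congr rfl fun j hj => OUslow_summand_eq H lam C2
      (Finset.mem_Icc.mp hj).1 ((Finset.mem_Icc.mp hj).2.trans (Nat.sub_le n 1))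
  · rw [show 1 - 2 * (1 - H) = 2 * H - 1 by ring, show 2 - 2 * (1 - H) = 2 * H by ring]
    congr 1
    ring

/-- as `n → ∞` over positive integers,
`n^{-2H} ∑_{j=1}^{n-1} (n-j) L(j) j^{-2(1-H)} → C₂Γ(2(1-H))/(2H(2H-1))`. -/
theorem stmt9 (H lam C2 : ℝ) (hH : H ∈ Set.Ioo (1 / 2 : ℝ) 1)
    (hlam : 0 < lam) (hC2 : 0 < C2) :
    Tendsto (fun n : ℕ =>
        (n : ℝ) ^ (-(2 * H)) *
          ∑ j ∈ Finset.Icc 1 (n - 1),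
            ((n : ℝ) - (j : ℝ)) * OUslow H lam C2 (j : ℝ) * (j : ℝ) ^ (-(2 * (1 - H))))
      atTop (nhds (C2 * Real.Gamma (2 * (1 - H)) / (2 * H * (2 * H - 1)))) :=
  stmt9_general H lam C2 hH hlam
end
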